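/- For all m1, m2 ∈ ℕ with m1 + m2 = 2^(2^n), the polynomial ℓ c^{m1} c̄^{m2} + s belongs to the ideal ⟨𝓕⟩ of Z2[X]; equivalently, α + s ∈ ⟨𝓕⟩ for every α ∈ C. -/
import Mathlib


open MvPolynomial

/-- Monomials in the variables `σ`, represented by their exponent vectors. -/
abbrev Mon (σ : Type*) := σ →₀ ℕ

/-- A monomial order: a total order on monomials such that `1 ≼ t` for every monomial `t`
and `t ≼ u → t·v ≼ u·v` (written additively on exponent vectors). -/
structure MonOrd (σ : Type*) where
  le : Mon σ → Mon σ → Prop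
  le_refl : ∀ t, le t t
  le_trans : ∀ t u v, le t u → le u v → le t v
  le_antisymm : ∀ t u, le t u → le u t → t = u
  le_total : ∀ t u, le t u ∨ le u t
  zero_le : ∀ t, le 0 t
  add_le_add : ∀ t u v, le t u → le (t + v) (u + v)

/-- Strict version of a monomial order. -/
def MonOrd.lt {σ : Type*} (μ : MonOrd σ) (t u : Mon σ) : Prop := μ.le t u ∧ t ≠ u

/-- The extension of a monomial order (given by the relation `r` on monomials) to polynomials:
`g ≼ f` iff `g = f` or the greatest monomial on which `f` and `g` differ occurs in `f`.
(This is the closed form of the recursive definition: `g ≼ f` iff `g = f`, or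
`HT g ≺ HT f`, or `HT g = HT f` and `g - HT g ≼ f - HT f`, with `0` the least polynomial.) -/
def polyLe {σ : Type*} (r : Mon σ → Mon σ → Prop) (g f : MvPolynomial σ (ZMod 2)) : Prop :=
  g = f ∨ ∃ t, t ∈ f.support ∧ t ∉ g.support ∧
    ∀ u : Mon σ, ((u ∈ f.support ∧ u ∉ g.support) ∨ (u ∈ g.support ∧ u ∉ f.support)) → r u t

/-- Strict extension of a monomial order to polynomials. -/
def polyLt {σ : Type*} (r : Mon σ → Mon σ → Prop) (g f : MvPolynomial σ (ZMod 2)) : Prop :=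
  polyLe r g f ∧ g ≠ f

/-- `S_F`: the set of non-residual polynomials with respect to `F` and the monomial order `r`,
i.e. those `f` admitting a `g` with `f + g ∈ ⟨F⟩` and `g ≺ f`. -/
def SF {σ : Type*} (r : Mon σ → Mon σ → Prop) (F : Set (MvPolynomial σ (ZMod 2))) :
    Set (MvPolynomial σ (ZMod 2)) :=
  {f | ∃ g, f + g ∈ Ideal.span F ∧ polyLt r g f}

/-- `t` is the head monomial (`r`-greatest monomial) of the polynomial `f`. -/
def IsHT {σ : Type*} (r : Mon σ → Mon σ → Prop) (f : MvPolynomial σ (ZMod 2)) (t : Mon σ) :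
    Prop :=
  t ∈ f.support ∧ ∀ u ∈ f.support, r u t

/-- `HT(S)`: the set of head monomials (as polynomials) of the nonzero elements of `S`. -/
def HTset {σ : Type*} (r : Mon σ → Mon σ → Prop) (S : Set (MvPolynomial σ (ZMod 2))) :
    Set (MvPolynomial σ (ZMod 2)) :=
  {p | ∃ f ∈ S, f ≠ 0 ∧ ∃ t, IsHT r f t ∧ p = monomial t 1}

/-- The divisibility (componentwise) order `◁` on monomials. -/
def triMon {σ : Type*} (t u : Mon σ) : Prop := ∀ x, t x ≤ u x

/-- The order `◁` on polynomials: `p ◁ q` iff there is an injective map `φ` from the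
monomials of `p` to the monomials of `q` with `t ◁ φ t` for each monomial `t` of `p`. -/
def triPoly {σ : Type*} (p q : MvPolynomial σ (ZMod 2)) : Prop :=
  ∃ φ : Mon σ → Mon σ, Set.InjOn φ ↑p.support ∧ ∀ t ∈ p.support, φ t ∈ q.support ∧ triMon t (φ t)

/-- Upward closure with respect to `◁`. -/
def upClo {σ : Type*} (A : Set (MvPolynomial σ (ZMod 2))) : Set (MvPolynomial σ (ZMod 2)) :=
  {q | ∃ p ∈ A, triPoly p q}

/-- `Min_◁(A)`: the `◁`-minimal elements of `A`. -/
def minTri {σ : Type*} (A : Set (MvPolynomial σ (ZMod 2))) : Set (MvPolynomial σ (ZMod 2)) :=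
  {p | p ∈ A ∧ ∀ q ∈ A, triPoly q p → q = p}

/-- `G` is a Gröbner basis of the ideal `I` with respect to the monomial order `r`. -/
def IsGB {σ : Type*} (r : Mon σ → Mon σ → Prop) (G : Finset (MvPolynomial σ (ZMod 2)))
    (I : Ideal (MvPolynomial σ (ZMod 2))) : Prop :=
  (↑G : Set (MvPolynomial σ (ZMod 2))) ⊆ ↑I ∧
    Ideal.span (↑G : Set (MvPolynomial σ (ZMod 2))) = I ∧
    Ideal.span (HTset r (↑I : Set (MvPolynomial σ (ZMod 2)))) = Ideal.span (HTset r ↑G)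

/-- `G` is a reduced Gröbner basis of `I` with respect to `r`. -/
def IsReducedGB {σ : Type*} (r : Mon σ → Mon σ → Prop) (G : Finset (MvPolynomial σ (ZMod 2)))
    (I : Ideal (MvPolynomial σ (ZMod 2))) : Prop :=
  IsGB r G I ∧ ∀ f ∈ G, ¬ ∀ t ∈ f.support,
    (monomial t 1 : MvPolynomial σ (ZMod 2)) ∈
      Ideal.span (HTset r ((↑G : Set (MvPolynomial σ (ZMod 2))) \ {f}))

/-- The variable set `X`: the special variables `s, ℓ, c, c̄, b, b̄` together with, for each
`0 ≤ i ≤ n`, the variables `s_i, f_i, q_{ji}, c_{ji}, b_{ji}` (`1 ≤ j ≤ 4`, encoded by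
`j : Fin 4`) and their barred copies (`bar = true`). -/
inductive MVar (n : ℕ) : Type where
  | vs | vl | vc | vcb | vb | vbb
  | vS (bar : Bool) (i : Fin (n+1))
  | vF (bar : Bool) (i : Fin (n+1))
  | vQ (bar : Bool) (j : Fin 4) (i : Fin (n+1))
  | vC (bar : Bool) (j : Fin 4) (i : Fin (n+1))
  | vB (bar : Bool) (j : Fin 4) (i : Fin (n+1))
deriving DecidableEq

open MVar

abbrev MPoly (n : ℕ) := MvPolynomial (MVar n) (ZMod 2)

/-- `e(n) = 2^(2^n)`. -/
def en (n : ℕ) : ℕ := 2 ^ 2 ^ n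

/-- The set `P_0` (barred copy if `bar = true`). -/
def P0 (n : ℕ) (bar : Bool) : Set (MPoly n) :=
  {p | ∃ j : Fin 4, p =
    X (vB bar j 0) ^ 2 * X (vC bar j 0) * X (vF bar 0) + X (vC bar j 0) * X (vS bar 0)}

/-- The set `P_m` for `m = i+1`, `i : Fin n` (barred copy if `bar = true`).
Here `i.succ` plays the role of `m` and `i.castSucc` the role of `m-1`; the indices
`1,2,3,4` of the paper are encoded as `0,1,2,3 : Fin 4`. -/
def Pm (n : ℕ) (bar : Bool) (i : Fin n) : Set (MPoly n) :=
  ({ X (vQ bar 0 i.succ) * X (vC bar 0 i.castSucc) * X (vS bar i.castSucc) + X (vS bar i.succ),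
    X (vQ bar 1 i.succ) * X (vC bar 1 i.castSucc) * X (vS bar i.castSucc)
      + X (vQ bar 0 i.succ) * X (vB bar 0 i.castSucc) * X (vC bar 0 i.castSucc)
        * X (vF bar i.castSucc),
    X (vQ bar 2 i.succ) * X (vC bar 2 i.castSucc) * X (vF bar i.castSucc)
      + X (vQ bar 1 i.succ) * X (vC bar 1 i.castSucc) * X (vF bar i.castSucc),
    X (vQ bar 2 i.succ) * X (vB bar 0 i.castSucc) * X (vC bar 2 i.castSucc)
        * X (vS bar i.castSucc)
      + X (vQ bar 1 i.succ) * X (vB bar 3 i.castSucc) * X (vC bar 1 i.castSucc)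
        * X (vS bar i.castSucc),
    X (vQ bar 3 i.succ) * X (vB bar 3 i.castSucc) * X (vC bar 3 i.castSucc)
        * X (vF bar i.castSucc)
      + X (vQ bar 2 i.succ) * X (vC bar 2 i.castSucc) * X (vS bar i.castSucc),
    X (vQ bar 3 i.succ) * X (vC bar 3 i.castSucc) * X (vS bar i.castSucc)
      + X (vF bar i.succ) } : Set (MPoly n))
  ∪ {p | ∃ j : Fin 4, p =
      X (vQ bar 1 i.succ) * X (vB bar 2 i.castSucc) * X (vB bar j i.succ) * X (vC bar j i.succ)
          * X (vF bar i.castSucc)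
        + X (vQ bar 1 i.succ) * X (vB bar 1 i.castSucc) * X (vC bar j i.succ)
          * X (vF bar i.castSucc)}

/-- The set `P = P_0 ∪ P_1 ∪ ⋯ ∪ P_n`; for `bar = true` this is the barred copy `P̄`
(the image of `P` under the substitution replacing each variable by its barred version). -/
def PP (n : ℕ) (bar : Bool) : Set (MPoly n) := P0 n bar ∪ ⋃ i : Fin n, Pm n bar i

/-- The set `G` of seven extra binomials. -/
def GG (n : ℕ) : Set (MPoly n) :=
  { X (vB false 3 (Fin.last n)) * X vl * X vb + X vl * X vc,
    X (vB false 3 (Fin.last n)) * X vl * X vbb + X vl * X vcb,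
    X (vC false 3 (Fin.last n)) * X (vF false (Fin.last n)) + X vl,
    X (vC true 3 (Fin.last n)) * X (vF true (Fin.last n))
      + X (vC false 3 (Fin.last n)) * X (vS false (Fin.last n)),
    X (vB true 3 (Fin.last n)) * X (vC false 3 (Fin.last n)) * X (vS false (Fin.last n))
      + X (vC false 3 (Fin.last n)) * X (vS false (Fin.last n)) * X vb,
    X (vB true 3 (Fin.last n)) * X (vC false 3 (Fin.last n)) * X (vS false (Fin.last n))
      + X (vC false 3 (Fin.last n)) * X (vS false (Fin.last n)) * X vbb,
    X (vC true 3 (Fin.last n)) * X (vS true (Fin.last n)) + X vs }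

/-- The set `𝓕 = P ∪ P̄ ∪ G`. -/
def FF (n : ℕ) : Set (MPoly n) := PP n false ∪ PP n true ∪ GG n

/-- The set `C = {ℓ c̄^{m1} c^{m2} : m1 + m2 = e(n)}` of monomials. -/
def Cmon (n : ℕ) : Set (Mon (MVar n)) :=
  {α | ∃ m1 m2 : ℕ, m1 + m2 = en n ∧
    α = Finsupp.single vl 1 + Finsupp.single vcb m1 + Finsupp.single vc m2}

/-- The set `D = {ℓ^j c̄^{m1} c^{m2} : j ∈ {0,1}, j + m1 + m2 ≤ e(n)}` of monomials. -/
def Dmon (n : ℕ) : Set (Mon (MVar n)) :=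
  {α | ∃ j m1 m2 : ℕ, j ≤ 1 ∧ j + m1 + m2 ≤ en n ∧
    α = Finsupp.single vl j + Finsupp.single vcb m1 + Finsupp.single vc m2}

/-- An injective rank function on the variables realizing the variable ordering
(from least to greatest): `s, c, c̄, ℓ, b, b̄`; then `s_0,…,s_n`; `f_0,…,f_n`;
`c_{10},…,c_{1n}; …; c_{40},…,c_{4n}`; `b_{10},…,b_{4n}`; `q_{10},…,q_{4n}`;
then the barred variables in the same pattern. -/
def vrank (n : ℕ) : MVar n → ℕ
  | .vs => 0
  | .vc => 1
  | .vcb => 2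
  | .vl => 3
  | .vb => 4
  | .vbb => 5
  | .vS bar i => 6 + (cond bar (14 * (n+1)) 0) + (i : ℕ)
  | .vF bar i => 6 + (cond bar (14 * (n+1)) 0) + (n+1) + (i : ℕ)
  | .vC bar j i => 6 + (cond bar (14 * (n+1)) 0) + 2*(n+1) + (j : ℕ)*(n+1) + (i : ℕ)
  | .vB bar j i => 6 + (cond bar (14 * (n+1)) 0) + 6*(n+1) + (j : ℕ)*(n+1) + (i : ℕ)
  | .vQ bar j i => 6 + (cond bar (14 * (n+1)) 0) + 10*(n+1) + (j : ℕ)*(n+1) + (i : ℕ)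

/-- The lexicographic monomial order on `X`: `t ≼_lex u` iff `t = u` or the exponents differ
somewhere and at the greatest variable (w.r.t. `vrank`) where they differ, the exponent of
`t` is smaller. -/
def lexLe (n : ℕ) (t u : Mon (MVar n)) : Prop :=
  t = u ∨ ∃ x : MVar n, t x < u x ∧ ∀ y : MVar n, vrank n x < vrank n y → t y = u y

/-- The total degree of a monomial. -/
def mdeg {σ : Type*} (t : Mon σ) : ℕ := t.sum fun _ k => k

/-- The degree lexicographic monomial order. -/
def degLexLe (n : ℕ) (t u : Mon (MVar n)) : Prop :=
  mdeg t < mdeg u ∨ (mdeg t = mdeg u ∧ lexLe n t u)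

/-- Weighted degree of a monomial with respect to a weight map `w`. -/
noncomputable def wdeg {n : ℕ} (w : MVar n → ℝ) (t : Mon (MVar n)) : ℝ :=
  t.sum fun x k => (k : ℝ) * w x

/-- The weighted monomial order determined by the weight map `w`. -/
def wLe {n : ℕ} (w : MVar n → ℝ) (t u : Mon (MVar n)) : Prop := t = u ∨ wdeg w t < wdeg w u



lemma step_aux {R : Type*} [CommRing R] (E : ℕ)
    (s f S F q1 q2 q3 q4 b1 b2 b3 b4 c1 c2 c3 c4 Bj Cj : R)
    (r1 : q1*c1*s = S)
    (r2 : q2*c2*s = q1*b1*c1*f)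
    (r3 : q3*c3*f = q2*c2*f)
    (r4 : q3*b1*c3*s = q2*b4*c2*s)
    (r5 : q4*b4*c4*f = q3*c3*s)
    (r6 : q4*c4*s = F)
    (r7 : q2*b3*Bj*Cj*f = q2*b2*Cj*f)
    (ih1 : b1^(E+1)*c1*f = c1*s) (ih2 : b2^(E+1)*c2*f = c2*s)
    (ih3 : b3^(E+1)*c3*f = c3*s) (ih4 : b4^(E+1)*c4*f = c4*s) :
    Bj^((E+1)*(E+1)) * Cj * F = Cj * S := by
  have d7 : ∀ k : ℕ, q2*Cj*f*b2^k = q2*Cj*f*(b3*Bj)^k := by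
    intro k
    induction k with
    | zero => ring
    | succ k ih => linear_combination b2 * ih - (b3*Bj)^k * r7
  have pass : Cj*(q2*c2*s) = Cj*Bj^(E+1)*(q3*c3*s) := by
    linear_combination -(Cj*q2)*ih2 + c2*(d7 (E+1)) - b3^(E+1)*Bj^(E+1)*Cj*r3
      + Bj^(E+1)*Cj*q3*ih3
  have loop : ∀ k : ℕ, Cj*b1^k*(q2*c2*s) = Cj*Bj^(k*(E+1))*b4^k*(q2*c2*s) := by
    intro k
    induction k with
    | zero => ring
    | succ k ih =>
      have e1 : (k+1)*(E+1) = k*(E+1) + (E+1) := by ring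
      rw [e1, pow_add]
      linear_combination b1*ih + (b1*Bj^(k*(E+1))*b4^k)*pass
        + (Cj*Bj^(k*(E+1))*Bj^(E+1)*b4^k)*r4
  have e2 : (E+1)*(E+1) = E*(E+1) + (E+1) := by ring
  rw [e2, pow_add]
  calc Bj^(E*(E+1)) * Bj^(E+1) * Cj * F
      = Bj^(E*(E+1)) * Bj^(E+1) * Cj * (q4*c4*s) := by
        linear_combination -(Bj^(E*(E+1))*Bj^(E+1)*Cj)*r6
    _ = Bj^(E*(E+1)) * Bj^(E+1) * Cj * q4 * (b4^(E+1)*c4*f) := by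
        linear_combination -(Bj^(E*(E+1))*Bj^(E+1)*Cj*q4)*ih4
    _ = Bj^(E*(E+1)) * Bj^(E+1) * b4^E * Cj * (q3*c3*s) := by
        linear_combination (Bj^(E*(E+1))*Bj^(E+1)*b4^E*Cj)*r5
    _ = Bj^(E*(E+1)) * b4^E * (Cj*(q2*c2*s)) := by
        linear_combination -(Bj^(E*(E+1))*b4^E)*pass
    _ = Cj*b1^E*(q2*c2*s) := by
        linear_combination -(loop E)
    _ = b1^E * Cj * (q1*b1*c1*f) := by
        linear_combination (b1^E*Cj)*r2
    _ = Cj * q1 * (b1^(E+1)*c1*f) := by ring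
    _ = Cj * q1 * (c1*s) := by rw [ih1]
    _ = Cj * S := by linear_combination Cj*r1


lemma final_aux {R : Type*} [CommRing R] (E m1 m2 : ℕ) (hm : m1 + m2 = E)
    (s L C Cb B Bb b4 c4 fn sn bb4 cb4 fbn sbn : R)
    (g1 : b4*L*B = L*C) (g2 : b4*L*Bb = L*Cb) (g3 : c4*fn = L)
    (g4 : cb4*fbn = c4*sn) (g5 : bb4*c4*sn = c4*sn*B) (g6 : bb4*c4*sn = c4*sn*Bb)
    (g7 : cb4*sbn = s)
    (h1 : b4^E*c4*fn = c4*sn) (h2 : bb4^E*cb4*fbn = cb4*sbn) :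
    L * C^m1 * Cb^m2 = s := by
  have u1 : ∀ k : ℕ, L*C^k = b4^k*L*B^k := by
    intro k
    induction k with
    | zero => ring
    | succ k ih => linear_combination C*ih - (b4^k*B^k)*g1
  have u2 : ∀ k : ℕ, L*Cb^k = b4^k*L*Bb^k := by
    intro k
    induction k with
    | zero => ring
    | succ k ih => linear_combination Cb*ih - (b4^k*Bb^k)*g2
  have v1 : ∀ k : ℕ, c4*sn*B^k = bb4^k*(c4*sn) := by
    intro k
    induction k with
    | zero => ring
    | succ k ih => linear_combination B*ih - bb4^k*g5
  have v2 : ∀ k : ℕ, c4*sn*Bb^k = bb4^k*(c4*sn) := by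
    intro k
    induction k with
    | zero => ring
    | succ k ih => linear_combination Bb*ih - bb4^k*g6
  calc L * C^m1 * Cb^m2
      = (b4^m1*L*B^m1) * Cb^m2 := by rw [u1 m1]
    _ = b4^m1*B^m1*(L*Cb^m2) := by ring
    _ = b4^m1*B^m1*(b4^m2*L*Bb^m2) := by rw [u2 m2]
    _ = b4^(m1+m2)*L*B^m1*Bb^m2 := by rw [pow_add]; ring
    _ = b4^E*(c4*fn)*B^m1*Bb^m2 := by rw [hm, g3]
    _ = (c4*sn)*B^m1*Bb^m2 := by
        linear_combination (B^m1*Bb^m2)*h1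
    _ = Bb^m2 * (c4*sn*B^m1) := by ring
    _ = Bb^m2 * (bb4^m1*(c4*sn)) := by rw [v1 m1]
    _ = bb4^m1 * (c4*sn*Bb^m2) := by ring
    _ = bb4^m1 * (bb4^m2*(c4*sn)) := by rw [v2 m2]
    _ = bb4^(m1+m2)*(cb4*fbn) := by rw [pow_add, g4]; ring
    _ = bb4^E*cb4*fbn := by rw [hm]; ring
    _ = cb4*sbn := h2
    _ = s := g7


open MVar in
lemma memFF_P0 (n : ℕ) (bar : Bool) {p : MPoly n} (hp : p ∈ P0 n bar) : p ∈ FF n := by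
  cases bar
  · exact Set.mem_union_left _ (Set.mem_union_left _ (Set.mem_union_left _ hp))
  · exact Set.mem_union_left _ (Set.mem_union_right _ (Set.mem_union_left _ hp))

open MVar in
lemma memFF_Pm (n : ℕ) (bar : Bool) (i : Fin n) {p : MPoly n} (hp : p ∈ Pm n bar i) :
    p ∈ FF n := by
  have h : p ∈ PP n bar := Set.mem_union_right _ (Set.mem_iUnion.mpr ⟨i, hp⟩)
  cases bar
  · exact Set.mem_union_left _ (Set.mem_union_left _ h)
  · exact Set.mem_union_left _ (Set.mem_union_right _ h)

lemma memFF_GG (n : ℕ) {p : MPoly n} (hp : p ∈ GG n) : p ∈ FF n :=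
  Set.mem_union_right _ hp

lemma mk_eq_of_mem {n : ℕ} {A B : MPoly n} (h : A + B ∈ Ideal.span (FF n)) :
    Ideal.Quotient.mk (Ideal.span (FF n)) A = Ideal.Quotient.mk (Ideal.span (FF n)) B := by
  rw [Ideal.Quotient.eq, CharTwo.sub_eq_add]; exact h

lemma mk_eq_of_gen {n : ℕ} {A B : MPoly n} (h : A + B ∈ FF n) :
    Ideal.Quotient.mk (Ideal.span (FF n)) A = Ideal.Quotient.mk (Ideal.span (FF n)) B :=
  mk_eq_of_mem (Ideal.subset_span h)

lemma mem_of_mk_eq {n : ℕ} {A B : MPoly n}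
    (h : Ideal.Quotient.mk (Ideal.span (FF n)) A = Ideal.Quotient.mk (Ideal.span (FF n)) B) :
    A + B ∈ Ideal.span (FF n) := by
  rw [← CharTwo.sub_eq_add]; exact Ideal.Quotient.eq.mp h

open MVar in
lemma main_lemma (n : ℕ) (bar : Bool) (m : Fin (n+1)) : ∀ j : Fin 4,
    (Ideal.Quotient.mk (Ideal.span (FF n)) (X (vB bar j m))) ^ (2 ^ 2 ^ (m : ℕ))
      * Ideal.Quotient.mk (Ideal.span (FF n)) (X (vC bar j m))
      * Ideal.Quotient.mk (Ideal.span (FF n)) (X (vF bar m))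
    = Ideal.Quotient.mk (Ideal.span (FF n)) (X (vC bar j m))
      * Ideal.Quotient.mk (Ideal.span (FF n)) (X (vS bar m)) := by
  induction m using Fin.induction with
  | zero =>
    intro j
    have h := mk_eq_of_gen (memFF_P0 n bar ⟨j, rfl⟩)
    simp only [map_mul, map_pow] at h
    have e0 : (2:ℕ) ^ 2 ^ ((0 : Fin (n+1)) : ℕ) = 2 := by norm_num
    rw [e0]
    exact h
  | succ i ih =>
    intro j
    obtain ⟨E, hE⟩ : ∃ E : ℕ, 2 ^ 2 ^ (i : ℕ) = E + 1 :=
      ⟨2 ^ 2 ^ (i : ℕ) - 1, (Nat.succ_pred_eq_of_pos (by positivity)).symm⟩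
    have hp1 := mk_eq_of_gen (memFF_Pm n bar i
      (Set.mem_union_left _ (Set.mem_insert _ _)))
    have hp2 := mk_eq_of_gen (memFF_Pm n bar i
      (Set.mem_union_left _ (Set.mem_insert_of_mem _ (Set.mem_insert _ _))))
    have hp3 := mk_eq_of_gen (memFF_Pm n bar i
      (Set.mem_union_left _ (Set.mem_insert_of_mem _ (Set.mem_insert_of_mem _
        (Set.mem_insert _ _)))))
    have hp4 := mk_eq_of_gen (memFF_Pm n bar i
      (Set.mem_union_left _ (Set.mem_insert_of_mem _ (Set.mem_insert_of_mem _
        (Set.mem_insert_of_mem _ (Set.mem_insert _ _))))))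
    have hp5 := mk_eq_of_gen (memFF_Pm n bar i
      (Set.mem_union_left _ (Set.mem_insert_of_mem _ (Set.mem_insert_of_mem _
        (Set.mem_insert_of_mem _ (Set.mem_insert_of_mem _ (Set.mem_insert _ _)))))))
    have hp6 := mk_eq_of_gen (memFF_Pm n bar i
      (Set.mem_union_left _ (Set.mem_insert_of_mem _ (Set.mem_insert_of_mem _
        (Set.mem_insert_of_mem _ (Set.mem_insert_of_mem _ (Set.mem_insert_of_mem _
          rfl)))))))
    have hp7 := mk_eq_of_gen (memFF_Pm n bar i
      (Set.mem_union_right _ ⟨j, rfl⟩))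
    simp only [map_mul, map_pow] at hp1 hp2 hp3 hp4 hp5 hp6 hp7
    simp only [Fin.coe_castSucc, hE] at ih
    have hE2 : 2 ^ 2 ^ ((i : ℕ) + 1) = (E+1)*(E+1) := by
      rw [pow_succ, pow_mul, hE]; ring
    simp only [Fin.val_succ, hE2]
    exact step_aux E _ _ _ _ _ _ _ _ _ _ _ _ _ _ _ _ _ _
      hp1 hp2 hp3 hp4 hp5 hp6 hp7 (ih 0) (ih 1) (ih 2) (ih 3)

open MVar in
/-- For all `m1 + m2 = 2^(2^n)`, `ℓ c^{m1} c̄^{m2} + s ∈ ⟨𝓕⟩`. -/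
theorem stmt7 (n : ℕ) (m1 m2 : ℕ) (h : m1 + m2 = en n) :
    (X vl * X vc ^ m1 * X vcb ^ m2 + X vs : MPoly n) ∈ Ideal.span (FF n) := by
  have g1 := mk_eq_of_gen (memFF_GG n (Set.mem_insert _ _))
  have g2 := mk_eq_of_gen (memFF_GG n
    (Set.mem_insert_of_mem _ (Set.mem_insert _ _)))
  have g3 := mk_eq_of_gen (memFF_GG n
    (Set.mem_insert_of_mem _ (Set.mem_insert_of_mem _ (Set.mem_insert _ _))))
  have g4 := mk_eq_of_gen (memFF_GG n
    (Set.mem_insert_of_mem _ (Set.mem_insert_of_mem _ (Set.mem_insert_of_mem _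
      (Set.mem_insert _ _)))))
  have g5 := mk_eq_of_gen (memFF_GG n
    (Set.mem_insert_of_mem _ (Set.mem_insert_of_mem _ (Set.mem_insert_of_mem _
      (Set.mem_insert_of_mem _ (Set.mem_insert _ _))))))
  have g6 := mk_eq_of_gen (memFF_GG n
    (Set.mem_insert_of_mem _ (Set.mem_insert_of_mem _ (Set.mem_insert_of_mem _
      (Set.mem_insert_of_mem _ (Set.mem_insert_of_mem _ (Set.mem_insert _ _)))))))
  have g7 := mk_eq_of_gen (memFF_GG n
    (Set.mem_insert_of_mem _ (Set.mem_insert_of_mem _ (Set.mem_insert_of_mem _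
      (Set.mem_insert_of_mem _ (Set.mem_insert_of_mem _ (Set.mem_insert_of_mem _
        rfl)))))))
  simp only [map_mul, map_pow] at g1 g2 g3 g4 g5 g6 g7
  have h1 := main_lemma n false (Fin.last n) 3
  have h2 := main_lemma n true (Fin.last n) 3
  simp only [Fin.val_last] at h1 h2
  rw [show (2:ℕ) ^ 2 ^ n = en n from rfl] at h1 h2
  apply mem_of_mk_eq
  simp only [map_mul, map_pow]
  exact final_aux (en n) m1 m2 h _ _ _ _ _ _ _ _ _ _ _ _ _ _
    g1 g2 g3 g4 g5 g6 g7 h1 h2
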